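/- arXiv:0801.0658 — 7 statements merged into one kernel-verified Lean document; each statement's English description precedes it below -/
import Mathlib

section
/- For every odd n ≥ 11, the sequence π = ((n−1)^2, 4^3, 3^{n−5}) of n terms is graphic, has σ(π) = 5n − 5, and is not potentially K_{3,3}-graphic. -/
/-!
Two vertices of degree `n - 1` are universal. In a copy of `K_{3,3}` with sides `A` and `B`,
a vertex `a ∈ A` of degree 3 has neighbourhood exactly `B`, so `B` contains both universal
vertices; the third vertex of `B` is then adjacent to the three vertices of `A` and to both
universal vertices, and has degree at least 5, which only universal vertices have. Hence all six
vertices of the copy have degree `n - 1` or `4`, but there are only `2 + 3` such vertices.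

For odd `n`, a realization is two universal vertices joined to a triangle and a perfect
matching on the remaining `n - 5` vertices.
-/

/-- `π` is the degree sequence (as a multiset) of the simple graph `G`. -/
def IsDegSeqOf {V : Type} [Fintype V] (G : SimpleGraph V) (π : List ℕ) : Prop :=
  Multiset.map (fun v => (G.neighborSet v).ncard) Finset.univ.val = (π : Multiset ℕ)

/-- `π` is graphic: it is realized by some simple graph on `π.length` vertices. -/
def IsGraphic (π : List ℕ) : Prop :=
  ∃ G : SimpleGraph (Fin π.length), IsDegSeqOf G π

/-- `π` is potentially `H`-graphic: some realization of `π` contains a copy of `H`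
as a subgraph (an injective graph homomorphism from `H`). -/
def PotentiallyGraphic {W : Type} (H : SimpleGraph W) (π : List ℕ) : Prop :=
  ∃ G : SimpleGraph (Fin π.length), IsDegSeqOf G π ∧ ∃ f : H →g G, Function.Injective f

/-- The complete bipartite graph `K_{3,3}`. -/
def K33 : SimpleGraph (Fin 3 ⊕ Fin 3) := completeBipartiteGraph (Fin 3) (Fin 3)

/-- `K_6 − C_6`, the complement of the 6-cycle. -/
def K6mC6 : SimpleGraph (Fin 6) := (SimpleGraph.cycleGraph 6)ᶜ

open Finset

namespace SimpleGraph

variable {V : Type*} [Fintype V] {G : SimpleGraph V} [DecidableRel G.Adj]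

lemma ncard_neighborSet_eq_degree (v : V) : (G.neighborSet v).ncard = G.degree v := by
  rw [← card_neighborSet_eq_degree, ← Nat.card_eq_fintype_card, Nat.card_coe_set_eq]

variable [DecidableEq V]

lemma three_lt_degree_of_biclique {A B : Finset V} (hAB : Disjoint A B) (hA : #A = 3)
    (hB : #B = 3) (hadj : ∀ a ∈ A, ∀ b ∈ B, G.Adj a b) {h₁ h₂ : V} (hh : h₁ ≠ h₂)
    (hu₁ : G.IsUniversal h₁) (hu₂ : G.IsUniversal h₂)
    (hsmall : ∀ v, v ≠ h₁ → v ≠ h₂ → G.degree v ≤ 4) {a : V} (ha : a ∈ A) :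
    3 < G.degree a := by
  have hBa : B ⊆ G.neighborFinset a := fun b hb =>
    (G.mem_neighborFinset a b).2 (hadj a ha b hb)
  have h3 : 3 ≤ G.degree a := by
    rw [← card_neighborFinset_eq_degree, ← hB]; exact card_le_card hBa
  refine lt_of_le_of_ne h3 fun h3 => ?_
  have hNa : G.neighborFinset a = B :=
    (eq_of_subset_of_card_le hBa (by rw [card_neighborFinset_eq_degree, ← h3, hB])).symm
  have hcard : 6 ≤ Fintype.card V := by
    calc 6 = #(A ∪ B) := by rw [card_union_of_disjoint hAB, hA, hB]
      _ ≤ _ := card_le_univ _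
  have hub_mem : ∀ h, G.IsUniversal h → h ∈ B := by
    intro h hu
    have hah : a ≠ h := by
      rintro rfl
      have := (G.degree_eq_card_sub_one a).2 hu
      omega
    rw [← hNa, mem_neighborFinset]
    exact (hu hah.symm).symm
  obtain ⟨u, hu⟩ : ((B.erase h₁).erase h₂).Nonempty := by
    rw [← card_pos, card_erase_of_mem (mem_erase.2 ⟨hh.symm, hub_mem h₂ hu₂⟩),
      card_erase_of_mem (hub_mem h₁ hu₁)]
    omega
  obtain ⟨hu₂', hu₁', huB⟩ : u ≠ h₂ ∧ u ≠ h₁ ∧ u ∈ B := by simpa using hu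
  have hsub : insert h₁ (insert h₂ A) ⊆ G.neighborFinset u := by
    intro w hw
    rw [mem_neighborFinset]
    rcases mem_insert.1 hw with rfl | hw
    · exact (hu₁ hu₁'.symm).symm
    rcases mem_insert.1 hw with rfl | hw
    · exact (hu₂ hu₂'.symm).symm
    · exact (hadj w hw u huB).symm
  have h5 : #(insert h₁ (insert h₂ A)) = 5 := by
    rw [card_insert_of_notMem, card_insert_of_notMem (disjoint_right.1 hAB (hub_mem h₂ hu₂)),
      hA]
    simp only [mem_insert, not_or]
    exact ⟨hh, disjoint_right.1 hAB (hub_mem h₁ hu₁)⟩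
  have := card_le_card hsub
  rw [h5, card_neighborFinset_eq_degree] at this
  have := hsmall u hu₁' hu₂'
  omega

lemma not_injective_K33_hom_of_two_universal {h₁ h₂ : V} (hh : h₁ ≠ h₂)
    (hu₁ : G.IsUniversal h₁) (hu₂ : G.IsUniversal h₂)
    (hsmall : ∀ v, v ≠ h₁ → v ≠ h₂ → G.degree v ≤ 4)
    (hfour : #{v | G.degree v = 4} ≤ 3) (f : K33 →g G) : ¬ Function.Injective f := by
  intro hf
  let A := univ.map ⟨f ∘ Sum.inl, hf.comp Sum.inl_injective⟩
  let B := univ.map ⟨f ∘ Sum.inr, hf.comp Sum.inr_injective⟩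
  have hAB : Disjoint A B := by
    rw [Finset.disjoint_left]
    simp only [A, B, mem_map, mem_univ, true_and, Function.Embedding.coeFn_mk,
      Function.comp_apply, not_exists, forall_exists_index]
    rintro _ i rfl j h
    exact Sum.inr_ne_inl (hf h)
  have hadj : ∀ a ∈ A, ∀ b ∈ B, G.Adj a b := by
    simp only [A, B, mem_map, mem_univ, true_and, Function.Embedding.coeFn_mk,
      Function.comp_apply, forall_exists_index]
    rintro _ i rfl _ j rfl
    exact f.map_rel (by simp [K33])
  have hdeg : ∀ x, 3 < G.degree (f x) := by
    rintro (i | j)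
    · exact three_lt_degree_of_biclique hAB (by simp [A]) (by simp [B]) hadj hh hu₁ hu₂ hsmall
        (mem_map_of_mem _ (mem_univ i))
    · exact three_lt_degree_of_biclique hAB.symm (by simp [B]) (by simp [A])
        (fun b hb a ha => (hadj a ha b hb).symm) hh hu₁ hu₂ hsmall
        (mem_map_of_mem _ (mem_univ j))
  have hsub : univ.map ⟨f, hf⟩ ⊆ {h₁, h₂} ∪ ({v | G.degree v = 4} : Finset V) := by
    simp only [subset_iff, mem_map, mem_univ, true_and, Function.Embedding.coeFn_mk, mem_union,
      mem_insert, mem_singleton, mem_filter, forall_exists_index]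
    rintro _ x rfl
    by_cases h : f x = h₁ ∨ f x = h₂
    · exact Or.inl h
    · push Not at h
      have := hsmall _ h.1 h.2
      have := hdeg x
      right; omega
  have := (card_le_card hsub).trans ((card_union_le _ _).trans (add_le_add card_le_two hfour))
  simp at this

end SimpleGraph

namespace IsDegSeqOf

lemma of_getElem {n : ℕ} {G : SimpleGraph (Fin n)} {π : List ℕ}
    (hlen : π.length = n) (h : ∀ v : Fin n, (G.neighborSet v).ncard = π[v.val]) :
    IsDegSeqOf G π := by
  subst hlen
  rw [IsDegSeqOf, Fin.univ_val_map, funext h, List.ofFn_getElem]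

variable {V : Type} [Fintype V] {G : SimpleGraph V} [DecidableRel G.Adj] {π : List ℕ}

lemma map_degree (h : IsDegSeqOf G π) :
    univ.val.map (fun v => G.degree v) = (π : Multiset ℕ) := by
  simpa only [IsDegSeqOf, SimpleGraph.ncard_neighborSet_eq_degree] using h

lemma degree_mem (h : IsDegSeqOf G π) (v : V) : G.degree v ∈ π := by
  rw [← Multiset.mem_coe, ← h.map_degree]
  exact Multiset.mem_map_of_mem _ (mem_univ v)

lemma card_filter_degree_eq (h : IsDegSeqOf G π) (t : ℕ) :
    #{v | G.degree v = t} = π.count t := by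
  rw [← Multiset.coe_count, ← h.map_degree, Multiset.count_map, card_def, filter_val]
  simp only [eq_comm]

end IsDegSeqOf

def seqK33 (n : ℕ) : List ℕ :=
  List.replicate 2 (n - 1) ++ List.replicate 3 4 ++ List.replicate (n - 5) 3

lemma length_seqK33 {n : ℕ} (hn : 5 ≤ n) : (seqK33 n).length = n := by
  simp only [seqK33, List.length_append, List.length_replicate]; omega

lemma sum_seqK33 {n : ℕ} (hn : 5 ≤ n) : (seqK33 n).sum = 5 * n - 5 := by
  simp only [seqK33, List.sum_append, List.sum_replicate, smul_eq_mul]; omega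

lemma getElem_seqK33 {n i : ℕ} (hi : i < (seqK33 n).length) :
    (seqK33 n)[i] = if i < 2 then n - 1 else if i < 5 then 4 else 3 := by
  simp only [seqK33, List.getElem_append, List.getElem_replicate, List.length_replicate,
    List.length_append]
  split_ifs <;> omega

lemma mem_seqK33 {n d : ℕ} (hn : 6 ≤ n) : d ∈ seqK33 n ↔ d = n - 1 ∨ d = 4 ∨ d = 3 := by
  simp only [seqK33, List.mem_append, List.mem_replicate]; omega

lemma count_seqK33_sub_one {n : ℕ} (hn : 6 ≤ n) : (seqK33 n).count (n - 1) = 2 := by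
  simp only [seqK33, List.count_append, List.count_replicate, beq_iff_eq]; split_ifs <;> omega

lemma count_seqK33_four {n : ℕ} (hn : 6 ≤ n) : (seqK33 n).count 4 = 3 := by
  simp only [seqK33, List.count_append, List.count_replicate, beq_iff_eq]; split_ifs <;> omega

/-- Blocks `{0, …, 4}, {5, 6}, {7, 8}, …`; the realization makes each block a clique and
`0, 1` universal. -/
def blockSeqK33 (v : ℕ) : ℕ := if v < 5 then 0 else (v + 1) / 2

def realizationSeqK33 (n : ℕ) : SimpleGraph (Fin n) :=
  SimpleGraph.fromRel fun v w => v.val < 2 ∨ blockSeqK33 v = blockSeqK33 w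

lemma val_image_neighborSet_realizationSeqK33 {n : ℕ} (v : Fin n) :
    Fin.val '' (realizationSeqK33 n).neighborSet v =
      {k | k < n ∧ k ≠ v.val ∧ (v.val < 2 ∨ k < 2 ∨ blockSeqK33 v = blockSeqK33 k)} := by
  ext k
  constructor
  · rintro ⟨w, ⟨hvw, hw⟩, rfl⟩
    refine ⟨w.isLt, fun h => hvw (Fin.ext h.symm), ?_⟩
    rcases hw with hw | hw <;> omega
  · rintro ⟨hk, hkv, hadj⟩
    refine ⟨⟨k, hk⟩, ⟨fun h => hkv (congrArg Fin.val h).symm, ?_⟩, rfl⟩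
    dsimp only
    omega

lemma ncard_neighborSet_realizationSeqK33 {n : ℕ} (hn : 5 ≤ n) (hodd : Odd n) (v : Fin n) :
    ((realizationSeqK33 n).neighborSet v).ncard =
      if v.val < 2 then n - 1 else if v.val < 5 then 4 else 3 := by
  have hv := v.isLt
  obtain ⟨m, rfl⟩ := hodd
  rw [← Set.ncard_image_of_injective _ Fin.val_injective,
    val_image_neighborSet_realizationSeqK33]
  split_ifs with h2 h5
  · calc _ = ((range (2 * m + 1)).erase v.val : Set ℕ).ncard := by
          congr 1; ext k; simp only [Set.mem_ofPred_eq, Finset.coe_erase, Finset.coe_range,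
            Set.mem_sdiff, Set.mem_Iio, Set.mem_singleton_iff]; omega
      _ = 2 * m + 1 - 1 := by
          rw [Set.ncard_coe_finset, card_erase_of_mem (by simpa using hv), card_range]
  · calc _ = ((range 5).erase v.val : Set ℕ).ncard := by
          congr 1; ext k; simp only [Set.mem_ofPred_eq, Finset.coe_erase, Finset.coe_range,
            Set.mem_sdiff, Set.mem_Iio, Set.mem_singleton_iff, blockSeqK33]; split_ifs <;> omega
      _ = 4 := by
          rw [Set.ncard_coe_finset, card_erase_of_mem (by simpa using h5), card_range]
  · calc _ = (({0, 1, if v.val % 2 = 1 then v.val + 1 else v.val - 1} : Finset ℕ) :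
            Set ℕ).ncard := by
          congr 1; ext k; simp only [Set.mem_ofPred_eq, Finset.coe_insert, Finset.coe_singleton,
            Set.mem_insert_iff, Set.mem_singleton_iff, blockSeqK33]; split_ifs <;> omega
      _ = 3 := by
          rw [Set.ncard_coe_finset, card_eq_three]
          exact ⟨0, 1, _, by omega, by split_ifs <;> omega, by split_ifs <;> omega, rfl⟩

lemma isGraphic_seqK33 {n : ℕ} (hn : 5 ≤ n) (hodd : Odd n) : IsGraphic (seqK33 n) := by
  refine ⟨realizationSeqK33 _, .of_getElem rfl fun v => ?_⟩
  have hlen := length_seqK33 hn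
  rw [ncard_neighborSet_realizationSeqK33 (by rwa [hlen]) (by rwa [hlen]), getElem_seqK33]
  simp only [hlen]

lemma not_potentiallyGraphic_K33_seqK33 {n : ℕ} (hn : 6 ≤ n) :
    ¬ PotentiallyGraphic K33 (seqK33 n) := by
  rintro ⟨G, hG, f, hf⟩
  classical
  have hcard : Fintype.card (Fin (seqK33 n).length) - 1 = n - 1 := by
    rw [Fintype.card_fin, length_seqK33 (by omega)]
  have hhubs : #{v | G.degree v = n - 1} = 2 := by
    rw [hG.card_filter_degree_eq, count_seqK33_sub_one hn]
  have hfour : #{v | G.degree v = 4} = 3 := by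
    rw [hG.card_filter_degree_eq, count_seqK33_four hn]
  obtain ⟨h₁, h₂, hh, hfilter⟩ := card_eq_two.1 hhubs
  have hub_iff : ∀ v, G.degree v = n - 1 ↔ v = h₁ ∨ v = h₂ := fun v => by
    simpa using Finset.ext_iff.1 hfilter v
  have huniv : ∀ v, G.degree v = n - 1 → G.IsUniversal v := fun v hv =>
    (G.degree_eq_card_sub_one v).1 (hv.trans hcard.symm)
  refine G.not_injective_K33_hom_of_two_universal hh (huniv _ ((hub_iff _).2 (.inl rfl)))
    (huniv _ ((hub_iff _).2 (.inr rfl))) (fun v hv₁ hv₂ => ?_) hfour.le f hf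
  have hv := hG.degree_mem v
  have := (hub_iff v).not.2 (by tauto)
  rw [mem_seqK33 hn] at hv
  omega

/-- For odd `n ≥ 11`, the sequence `((n−1)², 4³, 3^{n−5})` has `n` terms, is graphic,
has sum `5n − 5`, and is not potentially `K_{3,3}`-graphic. -/
theorem lower_bound_seq_K33_odd (n : ℕ) (hn : 11 ≤ n) (hodd : Odd n)
    (π : List ℕ)
    (hπ : π = List.replicate 2 (n - 1) ++ List.replicate 3 4 ++ List.replicate (n - 5) 3) :
    π.length = n ∧ IsGraphic π ∧ π.sum = 5 * n - 5 ∧ ¬ PotentiallyGraphic K33 π := by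
  obtain rfl : π = seqK33 n := hπ
  exact ⟨length_seqK33 (by omega), isGraphic_seqK33 (by omega) hodd, sum_seqK33 (by omega),
    not_potentiallyGraphic_K33_seqK33 (by omega)⟩
end

section
/- For every even n ≥ 11, the sequence π = ((n−1)^2, 4^3, 3^{n−6}, 2) of n terms is graphic, has σ(π) = 5n − 6, and is not potentially K_{3,3}-graphic. -/
/-!
In a realization the two vertices of degree `n − 1` are universal, they are the only vertices of
degree at least `5`, and only five vertices have degree at least `4`. Inside a copy of `K_{3,3}`
(indeed of any triangle-free graph of minimum degree `3`) a vertex is adjacent to its three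
copy-neighbours and to every universal vertex outside them. If both universal vertices are
copy-neighbours of some vertex `a`, a third copy-neighbour of `a` has neither of them among its own
copy-neighbours (no triangles), so it is a third vertex of degree at least `5`; otherwise all six
copy vertices have degree at least `4`.

For even `n`, two universal vertices, a triangle, a perfect matching on `n − 6` vertices and one
further vertex realize the sequence.
-/

open Finset SimpleGraph

namespace SimpleGraph

variable {V W : Type} [Fintype V] [Fintype W] {G : SimpleGraph V} {H : SimpleGraph W}
  [DecidableRel G.Adj] [DecidableRel H.Adj]

lemma disjoint_neighborFinset_of_cliqueFree_three (hH : H.CliqueFree 3) {a b : W}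
    (hab : H.Adj a b) : Disjoint (H.neighborFinset a) (H.neighborFinset b) := by
  classical
  rw [Finset.disjoint_left]
  intro c hca hcb
  rw [mem_neighborFinset] at hca hcb
  exact hH {a, b, c} (is3Clique_triple_iff.2 ⟨hab, hca, hcb⟩)

lemma degree_add_degree_le_card_of_cliqueFree_three (hH : H.CliqueFree 3) {a b : W}
    (hab : H.Adj a b) : H.degree a + H.degree b ≤ Fintype.card W := by
  classical
  rw [← card_neighborFinset_eq_degree, ← card_neighborFinset_eq_degree,
    ← card_union_of_disjoint (disjoint_neighborFinset_of_cliqueFree_three hH hab)]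
  exact card_le_univ _

lemma Copy.degree_add_card_le_degree (f : Copy H G) (a : W) {U : Finset V}
    (hU : ∀ u ∈ U, G.IsUniversal u) (hfa : f a ∉ U) (hUa : ∀ b, H.Adj a b → f b ∉ U) :
    H.degree a + #U ≤ G.degree (f a) := by
  classical
  rw [← card_neighborFinset_eq_degree, ← card_neighborFinset_eq_degree,
    ← card_map f.toEmbedding]
  refine (card_union_of_disjoint ?_).symm.le.trans (card_le_card ?_)
  · simp only [Finset.disjoint_left, mem_map, mem_neighborFinset]
    rintro _ ⟨b, hab, rfl⟩
    exact hUa b hab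
  · intro v hv
    rw [mem_union, mem_map] at hv
    rw [mem_neighborFinset]
    rcases hv with ⟨b, hab, rfl⟩ | hvU
    · exact f.toHom.map_adj ((mem_neighborFinset _ _ _).1 hab)
    · exact (hU v hvU (ne_of_mem_of_not_mem hvU hfa)).symm

lemma Copy.exists_five_le_degree_of_adj_of_adj (hH : H.CliqueFree 3) (hδ : ∀ a, 3 ≤ H.degree a)
    (f : Copy H G) {a b₁ b₂ : W} (hab₁ : H.Adj a b₁) (hab₂ : H.Adj a b₂) (hne : f b₁ ≠ f b₂)
    (h₁ : G.IsUniversal (f b₁)) (h₂ : G.IsUniversal (f b₂)) :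
    ∃ v, v ≠ f b₁ ∧ v ≠ f b₂ ∧ 5 ≤ G.degree v := by
  classical
  have hf : Function.Injective f := f.injective
  obtain ⟨b, hb⟩ : (H.neighborFinset a \ {b₁, b₂}).Nonempty := by
    have := card_le_card_sdiff_add_card (s := H.neighborFinset a) (t := {b₁, b₂})
    have := card_le_two (a := b₁) (b := b₂)
    have := hδ a
    rw [card_neighborFinset_eq_degree] at *
    rw [← card_pos]
    omega
  simp only [mem_sdiff, mem_neighborFinset, mem_insert, mem_singleton, not_or] at hb
  obtain ⟨hab, hbb₁, hbb₂⟩ := hb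
  have hU : ∀ u ∈ ({f b₁, f b₂} : Finset V), G.IsUniversal u := by simp [h₁, h₂]
  have hfb : f b ∉ ({f b₁, f b₂} : Finset V) := by simp [hf.ne hbb₁, hf.ne hbb₂]
  have hcross : ∀ c, H.Adj b c → f c ∉ ({f b₁, f b₂} : Finset V) := by
    intro c hbc hc
    simp only [mem_insert, mem_singleton, hf.eq_iff] at hc
    rcases hc with rfl | rfl
    · exact hH {a, b, c} (is3Clique_triple_iff.2 ⟨hab, hab₁, hbc⟩)
    · exact hH {a, b, c} (is3Clique_triple_iff.2 ⟨hab, hab₂, hbc⟩)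
  have := f.degree_add_card_le_degree b hU hfb hcross
  rw [card_pair hne] at this
  exact ⟨f b, hf.ne hbb₁, hf.ne hbb₂, by linarith [hδ b]⟩

lemma Copy.four_le_degree (hH : H.CliqueFree 3) (hδ : ∀ a, 3 ≤ H.degree a) (f : Copy H G)
    (a : W) {w : V} (hw : G.IsUniversal w) (hwa : ∀ b, H.Adj a b → f b ≠ w) :
    4 ≤ G.degree (f a) := by
  by_cases hfa : f a = w
  · obtain ⟨b, hab⟩ := (H.degree_pos_iff_exists_adj a).1 (by linarith [hδ a])
    have := degree_add_degree_le_card_of_cliqueFree_three hH hab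
    have := Fintype.card_le_of_injective f f.injective
    have := hδ a
    have := hδ b
    rw [(G.degree_eq_card_sub_one _).2 (hfa ▸ hw)]
    omega
  · have := f.degree_add_card_le_degree a (U := {w}) (by simpa using hw) (by simpa using hfa)
      (by simpa using hwa)
    rw [card_singleton] at this
    linarith [hδ a]

theorem Copy.exists_five_le_degree_or_card_le (hH : H.CliqueFree 3)
    (hδ : ∀ a, 3 ≤ H.degree a) (f : Copy H G) {w₁ w₂ : V} (hne : w₁ ≠ w₂)
    (h₁ : G.IsUniversal w₁) (h₂ : G.IsUniversal w₂) :
    (∃ v, v ≠ w₁ ∧ v ≠ w₂ ∧ 5 ≤ G.degree v) ∨ Fintype.card W ≤ #{v | 4 ≤ G.degree v} := by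
  by_cases hside : ∃ a b₁ b₂, H.Adj a b₁ ∧ H.Adj a b₂ ∧ f b₁ = w₁ ∧ f b₂ = w₂
  · obtain ⟨a, b₁, b₂, hab₁, hab₂, rfl, rfl⟩ := hside
    exact .inl (f.exists_five_le_degree_of_adj_of_adj hH hδ hab₁ hab₂ hne h₁ h₂)
  · push Not at hside
    refine .inr ?_
    calc Fintype.card W = #(univ.map f.toEmbedding) := by simp
      _ ≤ #{v | 4 ≤ G.degree v} := card_le_card fun v hv => ?_
    obtain ⟨a, -, rfl⟩ := mem_map.1 hv
    rw [mem_filter]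
    refine ⟨mem_univ _, ?_⟩
    by_cases hw₁ : ∀ b, H.Adj a b → f b ≠ w₁
    · exact f.four_le_degree hH hδ a h₁ hw₁
    · push Not at hw₁
      obtain ⟨b₁, hab₁, hb₁⟩ := hw₁
      exact f.four_le_degree hH hδ a h₂ fun b₂ hab₂ => hside a b₁ b₂ hab₁ hab₂ hb₁

end SimpleGraph

lemma isDegSeqOf_iff {V : Type} [Fintype V] {G : SimpleGraph V} [DecidableRel G.Adj]
    {π : List ℕ} : IsDegSeqOf G π ↔ univ.val.map (G.degree ·) = (π : Multiset ℕ) := by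
  simp only [IsDegSeqOf, Set.ncard_eq_toFinset_card', ← card_neighborFinset_eq_degree]
  rfl

lemma IsDegSeqOf.card_filter_degree {V : Type} [Fintype V] {G : SimpleGraph V}
    [DecidableRel G.Adj] {π : List ℕ} (h : IsDegSeqOf G π) (p : ℕ → Prop) [DecidablePred p] :
    #{v | p (G.degree v)} = π.countP (p ·) := by
  rw [← Multiset.coe_countP, ← isDegSeqOf_iff.1 h, Multiset.countP_map, card_def, filter_val]

lemma K33_cliqueFree_three : K33.CliqueFree 3 :=
  (CompleteBipartiteGraph.bicoloring _ _).colorable.cliqueFree (by simp)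

instance : DecidableRel K33.Adj := fun a b =>
  inferInstanceAs (Decidable (a.isLeft ∧ b.isRight ∨ a.isRight ∧ b.isLeft))

lemma K33_degree (a : Fin 3 ⊕ Fin 3) : K33.degree a = 3 := by
  revert a; decide

def k33ExtremalSeq (n : ℕ) : List ℕ :=
  List.replicate 2 (n - 1) ++ List.replicate 3 4 ++ List.replicate (n - 6) 3 ++ [2]

section

variable {n : ℕ}

lemma k33ExtremalSeq_length (hn : 6 ≤ n) : (k33ExtremalSeq n).length = n := by
  simp [k33ExtremalSeq]; omega

lemma k33ExtremalSeq_sum (hn : 6 ≤ n) : (k33ExtremalSeq n).sum = 5 * n - 6 := by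
  simp [k33ExtremalSeq]; omega

lemma k33ExtremalSeq_countP (p : ℕ → Prop) [DecidablePred p] :
    (k33ExtremalSeq n).countP (p ·) =
      (if p (n - 1) then 2 else 0) + (if p 4 then 3 else 0) + (if p 3 then n - 6 else 0) +
        if p 2 then 1 else 0 := by
  simp only [k33ExtremalSeq, List.countP_append, List.countP_replicate, List.countP_singleton]
  simp

lemma k33ExtremalSeq_getElem {i : ℕ} (hn : 6 ≤ n) (hi : i < (k33ExtremalSeq n).length) :
    (k33ExtremalSeq n)[i] =
      if i < 2 then n - 1 else if i < 5 then 4 else if i < n - 1 then 3 else 2 := by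
  simp only [k33ExtremalSeq, List.getElem_append, List.getElem_replicate, List.length_append,
    List.length_replicate, List.getElem_singleton]
  split_ifs <;> omega

/-- Vertices `0, 1` are universal, `2, 3, 4` form a triangle, and the remaining vertices are
paired as `{2k - 1, 2k}`; for even `n` this is a perfect matching of `5, …, n - 2`, leaving
`n - 1` unpaired. -/
def k33ExtremalGraph (n : ℕ) : SimpleGraph (Fin n) :=
  SimpleGraph.fromRel fun i j =>
    i.val < 2 ∨ (i.val < 5 ∧ j.val < 5) ∨ (i.val + 1) / 2 = (j.val + 1) / 2

instance (n : ℕ) : DecidableRel (k33ExtremalGraph n).Adj := fun i j => by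
  unfold k33ExtremalGraph; infer_instance

lemma degree_k33ExtremalGraph (hn : 6 ≤ n) (heven : Even n) (i : Fin n) :
    (k33ExtremalGraph n).degree i =
      if i.val < 2 then n - 1 else if i.val < 5 then 4 else if i.val < n - 1 then 3 else 2 := by
  have hdeg : (k33ExtremalGraph n).degree i = #{j ∈ range n | i.val ≠ j ∧
      (i.val < 2 ∨ j < 2 ∨ (i.val < 5 ∧ j < 5) ∨ (i.val + 1) / 2 = (j + 1) / 2)} := by
    rw [← card_neighborFinset_eq_degree, neighborFinset_eq_filter, ← card_map Fin.valEmbedding]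
    congr 1
    ext j
    simp only [mem_map, mem_filter, mem_univ, true_and, mem_range, Fin.valEmbedding_apply,
      k33ExtremalGraph, fromRel_adj, ne_eq, Fin.ext_iff]
    constructor
    · rintro ⟨j, hj, rfl⟩
      exact ⟨j.isLt, by omega⟩
    · intro hj
      exact ⟨⟨j, hj.1⟩, by simp only; omega, rfl⟩
  rw [hdeg]
  obtain ⟨k, hk⟩ := i
  obtain ⟨m, rfl⟩ := heven
  dsimp only
  split_ifs with _ h₅
  · rw [show {j ∈ range (m + m) | _} = (range (m + m)).erase k by
      ext j; simp only [mem_filter, mem_range, mem_erase]; omega]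
    rw [card_erase_of_mem (mem_range.2 hk), card_range]
  · rw [show {j ∈ range (m + m) | _} = (range 5).erase k by
      ext j; simp only [mem_filter, mem_range, mem_erase]; omega]
    rw [card_erase_of_mem (mem_range.2 h₅), card_range]
  · rw [card_eq_three]
    -- `k + 2 * (k % 2) - 1` is the matching partner of `k`
    refine ⟨0, 1, k + 2 * (k % 2) - 1, by omega, by omega, by omega, ?_⟩
    have := Nat.mod_two_eq_zero_or_one k
    ext j; simp only [mem_filter, mem_range, mem_insert, mem_singleton]; omega
  · rw [show {j ∈ range (m + m) | _} = {0, 1} by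
      ext j; simp only [mem_filter, mem_range, mem_insert, mem_singleton]; omega]
    rfl

lemma isDegSeqOf_k33ExtremalGraph (hn : 6 ≤ n) (heven : Even n) :
    IsDegSeqOf (k33ExtremalGraph n) (k33ExtremalSeq n) := by
  rw [isDegSeqOf_iff, Fin.univ_val_map]
  congr 1
  refine List.ext_getElem (by simp [k33ExtremalSeq_length hn]) fun i h₁ h₂ => ?_
  rw [List.getElem_ofFn, degree_k33ExtremalGraph hn heven, k33ExtremalSeq_getElem hn]

lemma not_potentiallyGraphic_K33_k33ExtremalSeq (hn : 6 ≤ n) :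
    ¬ PotentiallyGraphic K33 (k33ExtremalSeq n) := by
  classical
  rintro ⟨G, hG, f, hf⟩
  have hcount (p : ℕ → Prop) [DecidablePred p] := (hG.card_filter_degree p).trans
    (k33ExtremalSeq_countP p)
  have hmax : #{v | G.degree v = n - 1} = 2 := by
    rw [hcount (· = n - 1)]; split_ifs <;> omega
  have h5 : #{v | 5 ≤ G.degree v} = 2 := by
    rw [hcount (5 ≤ ·)]; split_ifs <;> omega
  have h4 : #{v | 4 ≤ G.degree v} = 5 := by
    rw [hcount (4 ≤ ·)]; split_ifs <;> omega
  obtain ⟨w₁, w₂, hne, hw⟩ := card_eq_two.1 hmax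
  have hmem (v : Fin _) : G.degree v = n - 1 ↔ v = w₁ ∨ v = w₂ := by
    simpa using Finset.ext_iff.1 hw v
  have hw₁ : G.degree w₁ = n - 1 := (hmem w₁).2 (.inl rfl)
  have hw₂ : G.degree w₂ = n - 1 := (hmem w₂).2 (.inr rfl)
  have huniv (v) (hv : G.degree v = n - 1) : G.IsUniversal v := by
    rw [← degree_eq_card_sub_one, hv, Fintype.card_fin, k33ExtremalSeq_length hn]
  rcases (Hom.toCopy f hf).exists_five_le_degree_or_card_le K33_cliqueFree_three
      (fun a => (K33_degree a).ge) hne (huniv _ hw₁) (huniv _ hw₂) with ⟨v, hv₁, hv₂, hv⟩ | hcard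
  · have : 2 < #{v | 5 ≤ G.degree v} := by
      refine two_lt_card_iff.2 ⟨w₁, w₂, v, ?_, ?_, by simpa using hv, hne, hv₁.symm, hv₂.symm⟩ <;>
        simp only [mem_filter, mem_univ, true_and] <;> omega
    omega
  · simp only [Fintype.card_sum, Fintype.card_fin] at hcard
    omega

end

/-- For even `n ≥ 11`, the sequence `((n−1)², 4³, 3^{n−6}, 2)` has `n` terms, is graphic,
has sum `5n − 6`, and is not potentially `K_{3,3}`-graphic. -/
theorem lower_bound_seq_K33_even (n : ℕ) (hn : 11 ≤ n) (heven : Even n)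
    (π : List ℕ)
    (hπ : π = List.replicate 2 (n - 1) ++ List.replicate 3 4 ++
          List.replicate (n - 6) 3 ++ [2]) :
    π.length = n ∧ IsGraphic π ∧ π.sum = 5 * n - 6 ∧ ¬ PotentiallyGraphic K33 π := by
  have hn6 : 6 ≤ n := by omega
  obtain rfl : π = k33ExtremalSeq n := hπ
  refine ⟨k33ExtremalSeq_length hn6, ?_, k33ExtremalSeq_sum hn6,
    not_potentiallyGraphic_K33_k33ExtremalSeq hn6⟩
  rw [IsGraphic, k33ExtremalSeq_length hn6]
  exact ⟨_, isDegSeqOf_k33ExtremalGraph hn6 heven⟩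
end

section
/- Let t ∈ {5, 6}, and let n, i, k be integers with 1 ≤ i ≤ ⌊(n−k)/2⌋ and t ≤ k ≤ n − 2i. Then the sequence π = (n−i, k+i, 4^t, 2^{k−t}, 1^{n−2−k}) of n terms is not potentially K_{3,3}-graphic. -/
/-!
Let `W` be the two vertices of degree at least 5. A vertex of degree 4 or 2 sends at most two
edges to `W` and a vertex of degree 1 at most one; the degrees in `W` use up all of this capacity
together with an edge inside `W`. Hence the vertices of degree 2 and 1 have all their neighbours
in `W`, and the `t` vertices of degree 4 form a union of cycles of `G - W`. Both sides of a copy of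
`K_{3,3}` must meet `W`, so its other four vertices form one of these cycles, and the remaining
`t - 4 ∈ {1, 2}` vertices of degree 4 are too few to carry a cycle.
-/

open Finset

namespace SimpleGraph

variable {V : Type*} [Fintype V] {G : SimpleGraph V} [DecidableRel G.Adj]

theorem card_le_degree_of_forall_adj {u : V} {B : Finset V} (hB : ∀ b ∈ B, G.Adj u b) :
    #B ≤ G.degree u :=
  (card_le_card fun b hb => (G.mem_neighborFinset u b).2 (hB b hb)).trans_eq
    (G.card_neighborFinset_eq_degree u)

variable [DecidableEq V]

variable (G) in
theorem sum_card_neighborFinset_inter (s : Finset V) :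
    ∑ u, #(G.neighborFinset u ∩ s) = ∑ w ∈ s, G.degree w := by
  have h := sum_card_bipartiteAbove_eq_sum_card_bipartiteBelow (s := univ) (t := s) (r := G.Adj)
  simp only [bipartiteAbove, bipartiteBelow] at h
  convert h using 2 with u _ w
  · congr 1; ext; simp [and_comm]
  · rw [← card_neighborFinset_eq_degree]; congr 1; ext; simp [G.adj_comm]

/-- Double count the edges at `W`: a vertex `v ∉ W` sends at most `min (degree v) #W` of them
into `W`, and the vertices of `W` receive at most `#W * (#W - 1)` from inside `W`. If the degrees
in `W` reach this bound, every vertex outside `W` sends its full share. -/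
theorem card_neighborFinset_inter_eq_min {W : Finset V}
    (hW : #W * (#W - 1) + ∑ v ∈ Wᶜ, min (G.degree v) #W ≤ ∑ w ∈ W, G.degree w)
    {u : V} (hu : u ∉ W) : #(G.neighborFinset u ∩ W) = min (G.degree u) #W := by
  have hin : ∀ w ∈ W, #(G.neighborFinset w ∩ W) ≤ #W - 1 := fun w hw =>
    (card_le_card fun x hx => mem_erase.2
      ⟨(G.ne_of_adj ((G.mem_neighborFinset w x).1 (mem_inter.1 hx).1)).symm,
        (mem_inter.1 hx).2⟩).trans (card_erase_of_mem hw).le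
  have hout : ∀ v ∈ Wᶜ, #(G.neighborFinset v ∩ W) ≤ min (G.degree v) #W := fun v _ =>
    le_min ((card_le_card inter_subset_left).trans (G.card_neighborFinset_eq_degree v).le)
      (card_le_card inter_subset_right)
  have hsplit := sum_add_sum_compl W fun v => #(G.neighborFinset v ∩ W)
  rw [G.sum_card_neighborFinset_inter] at hsplit
  have hinW := sum_le_card_nsmul W _ _ hin
  rw [smul_eq_mul] at hinW
  have hge : ∑ v ∈ Wᶜ, min (G.degree v) #W ≤ ∑ v ∈ Wᶜ, #(G.neighborFinset v ∩ W) := by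
    linarith
  exact (sum_eq_sum_iff_of_le hout).1 (le_antisymm (sum_le_sum hout) hge) u (mem_compl.2 hu)

theorem neighborFinset_subset_of_degree_le {W : Finset V}
    (hW : #W * (#W - 1) + ∑ v ∈ Wᶜ, min (G.degree v) #W ≤ ∑ w ∈ W, G.degree w)
    {u : V} (hu : u ∉ W) (hdeg : G.degree u ≤ #W) : G.neighborFinset u ⊆ W := by
  have h := card_neighborFinset_inter_eq_min hW hu
  rw [min_eq_left hdeg, ← card_neighborFinset_eq_degree] at h
  exact inter_eq_left.1 (eq_of_subset_of_card_le inter_subset_left h.ge)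

theorem card_neighborFinset_sdiff {W : Finset V}
    (hW : #W * (#W - 1) + ∑ v ∈ Wᶜ, min (G.degree v) #W ≤ ∑ w ∈ W, G.degree w)
    {u : V} (hu : u ∉ W) (hdeg : #W ≤ G.degree u) :
    #(G.neighborFinset u \ W) = G.degree u - #W := by
  rw [card_sdiff, inter_comm, card_neighborFinset_inter_eq_min hW hu, min_eq_right hdeg,
    card_neighborFinset_eq_degree]

variable (G) in
/-- `F` is a union of cycles of `G - W`. -/
def IsTwoRegularOff (W F : Finset V) : Prop :=
  ∀ u ∈ F, u ∉ W ∧ G.neighborFinset u \ W ⊆ F ∧ #(G.neighborFinset u \ W) = 2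

namespace IsTwoRegularOff

variable {W F : Finset V}

/-- A vertex of `F \ C` has both its neighbours in `F \ C`. -/
theorem card_add_three_le (hF : G.IsTwoRegularOff W F) {C : Finset V} (hCF : C ⊆ F)
    (hC : ∀ c ∈ C, G.neighborFinset c \ W ⊆ C) (hlt : #C < #F) : #C + 3 ≤ #F := by
  obtain ⟨q, hqF, hqC⟩ := exists_mem_notMem_of_card_lt_card hlt
  obtain ⟨hqW, hqnbr, hq2⟩ := hF q hqF
  have hsub : G.neighborFinset q \ W ⊆ (F \ C).erase q := by
    intro x hx
    obtain ⟨hqx, hxW⟩ := mem_sdiff.1 hx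
    have hadj := (G.mem_neighborFinset q x).1 hqx
    refine mem_erase.2 ⟨hadj.ne', mem_sdiff.2 ⟨hqnbr hx, fun hxC => hqC (hC x hxC ?_)⟩⟩
    exact mem_sdiff.2 ⟨(G.mem_neighborFinset x q).2 hadj.symm, hqW⟩
  have := card_le_card hsub
  rw [hq2, card_erase_of_mem (mem_sdiff.2 ⟨hqF, hqC⟩), card_sdiff_of_subset hCF] at this
  omega

theorem inter_nonempty (hF : G.IsTwoRegularOff W F) (hW : #W ≤ 2)
    (hdeg : ∀ u ∉ W, 3 ≤ G.degree u → u ∈ F)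
    {A B : Finset V} (hA : #A = 3) (hB : #B = 3) (hAB : G.IsCompleteBetween A B) :
    (A ∩ W).Nonempty := by
  by_contra hAW
  rw [not_nonempty_iff_eq_empty, ← disjoint_iff_inter_eq_empty] at hAW
  obtain ⟨b, hbB, hbW⟩ := exists_mem_notMem_of_card_lt_card (s := W) (t := B) (by omega)
  have hAb : A ⊆ G.neighborFinset b \ W := fun a ha =>
    mem_sdiff.2 ⟨(G.mem_neighborFinset b a).2 (hAB ha hbB).symm, Finset.disjoint_left.1 hAW ha⟩
  have hb := hF b <| hdeg b hbW <| hA ▸ card_le_degree_of_forall_adj fun a ha =>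
    (hAB ha hbB).symm
  have := card_le_card hAb
  omega

theorem neighborFinset_sdiff_eq (hF : G.IsTwoRegularOff W F) {a : V} {B : Finset V}
    (ha : a ∈ F) (haB : ∀ b ∈ B, G.Adj a b) (hB : #(B \ W) = 2) :
    G.neighborFinset a \ W = B \ W := by
  have hsub : B \ W ⊆ G.neighborFinset a \ W :=
    sdiff_subset_sdiff (fun b hb => (G.mem_neighborFinset a b).2 (haB b hb)) le_rfl
  exact (eq_of_subset_of_card_le hsub (by rw [hB, (hF a ha).2.2])).symm

theorem not_isCompleteBetween (hF : G.IsTwoRegularOff W F) (hW : #W ≤ 2)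
    (hdeg : ∀ u ∉ W, 3 ≤ G.degree u → u ∈ F)
    (hF5 : 5 ≤ #F) (hF6 : #F ≤ 6) {A B : Finset V} (hA : #A = 3) (hB : #B = 3) :
    ¬ G.IsCompleteBetween A B := by
  intro hAB
  have hBA := hAB.symm
  have hdisj : Disjoint A B := disjoint_coe.1 hAB.disjoint
  have hAW := (hF.inter_nonempty hW hdeg hA hB hAB).card_pos
  have hBW := (hF.inter_nonempty hW hdeg hB hA hBA).card_pos
  have hABW : #(A ∩ W) + #(B ∩ W) ≤ #W := by
    rw [← card_union_of_disjoint (disjoint_of_subset_left inter_subset_left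
      (disjoint_of_subset_right inter_subset_left hdisj))]
    exact card_le_card (union_subset inter_subset_right inter_subset_right)
  have hA2 : #(A \ W) = 2 := by have := card_sdiff_add_card_inter A W; omega
  have hB2 : #(B \ W) = 2 := by have := card_sdiff_add_card_inter B W; omega
  have hAF : A \ W ⊆ F := fun a ha => hdeg a (mem_sdiff.1 ha).2 <|
    hB ▸ card_le_degree_of_forall_adj fun b hb => hAB (mem_sdiff.1 ha).1 hb
  have hBF : B \ W ⊆ F := fun b hb => hdeg b (mem_sdiff.1 hb).2 <|
    hA ▸ card_le_degree_of_forall_adj fun a ha => hBA (mem_sdiff.1 hb).1 ha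
  have hC : ∀ c ∈ A \ W ∪ B \ W, G.neighborFinset c \ W ⊆ A \ W ∪ B \ W := by
    intro c hc
    rcases mem_union.1 hc with hc | hc
    · rw [hF.neighborFinset_sdiff_eq (hAF hc) (fun b hb => hAB (mem_sdiff.1 hc).1 hb) hB2]
      exact subset_union_right
    · rw [hF.neighborFinset_sdiff_eq (hBF hc) (fun a ha => hBA (mem_sdiff.1 hc).1 ha) hA2]
      exact subset_union_left
  have hC4 : #(A \ W ∪ B \ W) = 4 := by
    rw [card_union_of_disjoint (disjoint_of_subset_left sdiff_subset
      (disjoint_of_subset_right sdiff_subset hdisj)), hA2, hB2]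
  have := hF.card_add_three_le (union_subset hAF hBF) hC (by omega)
  omega

end IsTwoRegularOff

theorem isTwoRegularOff_of_sum_degree_le {W : Finset V} (hW2 : #W = 2)
    (hW : #W * (#W - 1) + ∑ v ∈ Wᶜ, min (G.degree v) #W ≤ ∑ w ∈ W, G.degree w)
    (hsmall : ∀ v ∉ W, G.degree v ≤ 2 ∨ G.degree v = 4) :
    G.IsTwoRegularOff W {v ∈ Wᶜ | G.degree v = 4} := by
  intro u hu
  obtain ⟨huW, hu4⟩ : u ∉ W ∧ G.degree u = 4 := by simpa using hu
  refine ⟨huW, fun x hx => ?_, ?_⟩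
  · obtain ⟨hux, hxW⟩ := mem_sdiff.1 hx
    rcases hsmall x hxW with hx2 | hx4
    · have hxu : u ∈ G.neighborFinset x :=
        (G.mem_neighborFinset x u).2 ((G.mem_neighborFinset u x).1 hux).symm
      exact absurd (neighborFinset_subset_of_degree_le hW hxW (hW2 ▸ hx2) hxu) huW
    · simpa using ⟨hxW, hx4⟩
  · rw [card_neighborFinset_sdiff hW huW (by omega), hu4, hW2]

end SimpleGraph

open SimpleGraph

section DegreeSequence

variable {V : Type} [Fintype V] {G : SimpleGraph V} [DecidableRel G.Adj] {π : List ℕ}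

theorem IsDegSeqOf.map_degree_s11 (hG : IsDegSeqOf G π) :
    univ.val.map (fun v => G.degree v) = (π : Multiset ℕ) := by
  rw [← hG]
  congr 1
  funext v
  rw [Set.ncard_eq_toFinset_card', Set.toFinset_card, SimpleGraph.card_neighborSet_eq_degree]

theorem IsDegSeqOf.degree_mem_s11 (hG : IsDegSeqOf G π) (v : V) : G.degree v ∈ π :=
  Multiset.mem_coe.1 (hG.map_degree_s11 ▸ Multiset.mem_map_of_mem _ (mem_univ_val v))

theorem IsDegSeqOf.sum_degree_comp (hG : IsDegSeqOf G π) (g : ℕ → ℕ) :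
    ∑ v, g (G.degree v) = (π.map g).sum := by
  rw [sum_eq_multiset_sum, ← Function.comp_def g, ← Multiset.map_map, hG.map_degree_s11,
    Multiset.map_coe, Multiset.sum_coe]

end DegreeSequence

theorem not_K33_isContained_of_isDegSeqOf {V : Type} [Fintype V] [DecidableEq V]
    {G : SimpleGraph V} [DecidableRel G.Adj] {a b t m l : ℕ} (ha : 5 ≤ a) (hb : 5 ≤ b)
    (ht : t = 5 ∨ t = 6) (hab : 2 + 2 * t + 2 * m + l ≤ a + b)
    (hG : IsDegSeqOf G ([a, b] ++ List.replicate t 4 ++ List.replicate m 2 ++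
      List.replicate l 1)) :
    ¬ K33 ⊑ G := by
  rw [K33, completeBipartiteGraph_isContained_iff]
  rintro ⟨A, B, hA, hB, hAB⟩
  set W : Finset V := {v | 5 ≤ G.degree v}
  have hsmall : ∀ v ∉ W, G.degree v ≤ 2 ∨ G.degree v = 4 := by
    intro v hv
    have hv' := hG.degree_mem_s11 v
    simp only [W, mem_filter, mem_univ, true_and] at hv
    simp only [List.mem_append, List.mem_cons, List.mem_replicate, List.mem_nil_iff,
      or_false] at hv'
    omega
  have hW2 : #W = 2 := by
    rw [card_eq_sum_ones, sum_filter, hG.sum_degree_comp fun d => if 5 ≤ d then 1 else 0]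
    simp [ha, hb]
  have hF : #{v ∈ Wᶜ | G.degree v = 4} = t := by
    rw [compl_filter, filter_filter, card_eq_sum_ones, sum_filter,
      hG.sum_degree_comp fun d => if ¬ 5 ≤ d ∧ d = 4 then 1 else 0]
    simp [show a ≠ 4 by omega, show b ≠ 4 by omega]
  have hrigid : #W * (#W - 1) + ∑ v ∈ Wᶜ, min (G.degree v) #W ≤ ∑ w ∈ W, G.degree w := by
    rw [hW2, compl_filter, sum_filter, sum_filter,
      hG.sum_degree_comp fun d => if ¬ 5 ≤ d then min d 2 else 0,
      hG.sum_degree_comp fun d => if 5 ≤ d then d else 0]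
    simp [ha, hb, show ¬ a < 5 by omega, show ¬ b < 5 by omega]
    omega
  have hdeg : ∀ u ∉ W, 3 ≤ G.degree u → u ∈ ({v ∈ Wᶜ | G.degree v = 4} : Finset V) :=
    fun u hu h3 => mem_filter.2 ⟨mem_compl.2 hu, by have := hsmall u hu; omega⟩
  exact (isTwoRegularOff_of_sum_degree_le hW2 hrigid hsmall).not_isCompleteBetween hW2.le hdeg
    (by omega) (by omega) hA hB hAB

theorem K33_necessary_condition_8_general
    (n i k t : ℕ) (ht : t = 5 ∨ t = 6) (hi1 : 1 ≤ i)
    (hk1 : t ≤ k) (hk2 : k ≤ n - 2 * i) :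
    ¬ PotentiallyGraphic K33
      ([n - i, k + i] ++ List.replicate t 4 ++ List.replicate (k - t) 2 ++
        List.replicate (n - 2 - k) 1) := by
  rintro ⟨G, hG, f, hf⟩
  classical
  have ht5 : 5 ≤ t := by omega
  exact not_K33_isContained_of_isDegSeqOf (by omega) (by omega) ht (by omega) hG ⟨⟨f, hf⟩⟩

/-- Necessity of condition (8) in Theorem 3.1: for `t ∈ {5,6}`, the sequence
`(n−i, k+i, 4ᵗ, 2^{k−t}, 1^{n−2−k})` is not potentially `K_{3,3}`-graphic. -/
theorem K33_necessary_condition_8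
    (n i k t : ℕ) (ht : t = 5 ∨ t = 6) (hi1 : 1 ≤ i) (hi2 : i ≤ (n - k) / 2)
    (hk1 : t ≤ k) (hk2 : k ≤ n - 2 * i) :
    ¬ PotentiallyGraphic K33
      ([n - i, k + i] ++ List.replicate t 4 ++ List.replicate (k - t) 2 ++
        List.replicate (n - 2 - k) 1) :=
  K33_necessary_condition_8_general n i k t ht hi1 hk1 hk2
end

section
/- For every n ≥ 7, the sequence π = (n−2, 4, 3^5, 1^{n−7}) of n terms is not potentially K_{3,3}-graphic. -/
/-!
Suppose a realization `G` contains a copy of `K_{3,3}` (the argument works for any 3-regular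
graph on six vertices), and let `a` and `b` be the vertices of degree `n - 2` and `4`. Copy
vertices have degree at least 3, so at least four of them have degree exactly 3; such a vertex
is saturated: its neighbourhood is its neighbourhood in the copy. Since `a` misses a single
vertex, at most one saturated vertex is not adjacent to `a`, and the saturated vertices adjacent
to `a` are copy-neighbours of `a`, at most three. So exactly four copy vertices have degree 3,
one of them is the non-neighbour of `a`, and `a` is adjacent to everything outside the copy.
The fifth vertex `w` of degree 3 lies outside the copy. A neighbour of `w` other than `a`, `b`
is not saturated, not of degree 3 outside the copy (`w` is the only such vertex), and not of
degree 1 (it would be adjacent to both `a` and `w`). Hence `deg w ≤ 2`, a contradiction.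
-/

open Finset SimpleGraph

instance inst_s14 : DecidableRel K33.Adj := fun u v =>
  inferInstanceAs (Decidable ((u.isLeft ∧ v.isRight) ∨ (u.isRight ∧ v.isLeft)))

theorem K33_isRegularOfDegree : K33.IsRegularOfDegree 3 := by
  unfold SimpleGraph.IsRegularOfDegree
  decide

namespace SimpleGraph

variable {V W : Type*} [Fintype V] [Fintype W] {G : SimpleGraph V} [DecidableRel G.Adj]
  {H : SimpleGraph W}

theorem Copy.image_neighborFinset_of_degree_le [DecidableEq V] [DecidableRel H.Adj]
    (f : Copy H G) {u : W} (hu : G.degree (f u) ≤ H.degree u) :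
    (H.neighborFinset u).image f = G.neighborFinset (f u) := by
  refine eq_of_subset_of_card_le (fun v hv => ?_) ?_
  · obtain ⟨w, hw, rfl⟩ := mem_image.mp hv
    simpa using f.toHom.map_adj ((mem_neighborFinset _ _ _).mp hw)
  · rwa [card_image_of_injective (f := f) _ f.injective]

theorem Copy.exists_adj_apply_eq_of_degree_le [DecidableEq V] [DecidableRel H.Adj]
    (f : Copy H G) {u : W} (hu : G.degree (f u) ≤ H.degree u) {y : V} (hy : G.Adj (f u) y) :
    ∃ z, H.Adj u z ∧ f z = y := by
  have hy' : y ∈ (H.neighborFinset u).image f := by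
    rwa [f.image_neighborFinset_of_degree_le hu, mem_neighborFinset]
  simpa using hy'

theorem adj_of_degree_compl_le_one [DecidableEq V] {a x y : V} (ha : Gᶜ.degree a ≤ 1)
    (hx : Gᶜ.Adj a x) (hya : y ≠ a) (hyx : y ≠ x) : G.Adj a y := by
  by_contra hy
  have hy' : Gᶜ.Adj a y := (compl_adj G a y).mpr ⟨hya.symm, hy⟩
  exact hyx (card_le_one.mp ha y (by simpa using hy') x (by simpa using hx))

theorem two_le_degree_of_adj {x a b : V} (ha : G.Adj x a) (hb : G.Adj x b) (hab : a ≠ b) :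
    2 ≤ G.degree x := by
  rw [← card_neighborFinset_eq_degree]
  exact one_lt_card.mpr ⟨a, by simpa using ha, b, by simpa using hb, hab⟩

theorem card_le_card_filter_degree_add_two [DecidableEq V] [DecidableRel H.Adj] {d : ℕ}
    (hH : H.IsRegularOfDegree d) {a b : V} (hle : ∀ v, v ≠ a → v ≠ b → G.degree v ≤ d)
    (f : Copy H G) : Fintype.card W ≤ #{u | G.degree (f u) = d} + 2 := by
  have hne : #{u | ¬G.degree (f u) = d} ≤ 2 :=
    calc #{u | ¬G.degree (f u) = d}
        = #(({u | ¬G.degree (f u) = d} : Finset W).image f) :=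
          (card_image_of_injective (f := f) _ f.injective).symm
      _ ≤ #({a, b} : Finset V) := card_le_card fun v hv => by
          obtain ⟨u, hu, rfl⟩ := mem_image.mp hv
          have hdu : d ≤ G.degree (f u) := hH u ▸ f.degree_le u
          simp only [mem_filter, mem_univ, true_and] at hu
          simp only [mem_insert, mem_singleton]
          by_contra! h
          exact hu (le_antisymm (hle (f u) h.1 h.2) hdu)
      _ ≤ 2 := card_le_two
  have := card_filter_add_card_filter_not (s := univ) fun u => G.degree (f u) = d
  rw [card_univ] at this
  omega

theorem card_filter_degree_eq_adj_le [DecidableEq V] [DecidableRel H.Adj] {d : ℕ}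
    (hH : H.IsRegularOfDegree d) (a : V) (f : Copy H G) :
    #{u | G.degree (f u) = d ∧ G.Adj (f u) a} ≤ d := by
  rcases ({u | G.degree (f u) = d ∧ G.Adj (f u) a} : Finset W).eq_empty_or_nonempty
    with h | ⟨u₁, hu₁⟩
  · simp [h]
  simp only [mem_filter, mem_univ, true_and] at hu₁
  obtain ⟨u₀, -, rfl⟩ :=
    f.exists_adj_apply_eq_of_degree_le (hu₁.1.trans (hH u₁).symm).le hu₁.2
  calc #{u | G.degree (f u) = d ∧ G.Adj (f u) (f u₀)}
      ≤ #(H.neighborFinset u₀) := card_le_card fun u hu => by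
        simp only [mem_filter, mem_univ, true_and] at hu
        obtain ⟨z, hz, hzu₀⟩ :=
          f.exists_adj_apply_eq_of_degree_le (hu.1.trans (hH u).symm).le hu.2
        rw [f.injective hzu₀] at hz
        simpa using hz.symm
    _ = d := hH u₀

theorem card_filter_degree_eq_not_adj_le_one [DecidableEq V] {d : ℕ} {a : V}
    (ha : Gᶜ.degree a ≤ 1) (had : G.degree a ≠ d) (f : Copy H G) :
    #{u | G.degree (f u) = d ∧ ¬G.Adj (f u) a} ≤ 1 :=
  calc #{u | G.degree (f u) = d ∧ ¬G.Adj (f u) a}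
      = #(({u | G.degree (f u) = d ∧ ¬G.Adj (f u) a} : Finset W).image f) :=
        (card_image_of_injective (f := f) _ f.injective).symm
    _ ≤ #(Gᶜ.neighborFinset a) := card_le_card fun v hv => by
        obtain ⟨u, hu, rfl⟩ := mem_image.mp hv
        simp only [mem_filter, mem_univ, true_and] at hu
        simp only [mem_neighborFinset, compl_adj]
        exact ⟨fun h => had (h ▸ hu.1), fun h => hu.2 h.symm⟩
    _ ≤ 1 := ha

theorem existsUnique_degree_eq_notMem_range [DecidableEq V] {d k : ℕ} (f : Copy H G)
    (hG : #{v | G.degree v = d} = k + 1) (hf : #{u | G.degree (f u) = d} = k) :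
    ∃! w, G.degree w = d ∧ w ∉ Set.range f := by
  have himage : ({u | G.degree (f u) = d} : Finset W).image f
      = ({v | G.degree v = d ∧ v ∈ Set.range f} : Finset V) := by
    ext v
    simp only [mem_image, mem_filter, mem_univ, true_and, Set.mem_range]
    constructor
    · rintro ⟨u, hu, rfl⟩; exact ⟨hu, u, rfl⟩
    · rintro ⟨hv, u, rfl⟩; exact ⟨u, hv, rfl⟩
  have hsplit := card_filter_add_card_filter_not (s := ({v | G.degree v = d} : Finset V))
    fun v => v ∈ Set.range f
  rw [filter_filter, filter_filter, ← himage, card_image_of_injective (f := f) _ f.injective,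
    hf, hG] at hsplit
  obtain ⟨w, hw⟩ :=
    card_eq_one.mp (show #{v | G.degree v = d ∧ v ∉ Set.range f} = 1 by omega)
  refine ⟨w, by simpa using hw.ge (mem_singleton_self w), fun v hv => ?_⟩
  rw [← mem_singleton, ← hw]
  simpa using hv

theorem neighborFinset_subset_pair [DecidableEq V] [DecidableRel H.Adj] {d : ℕ}
    (hH : H.IsRegularOfDegree d) (hd : 2 ≤ d) {a b w : V}
    (hother : ∀ v, v ≠ a → v ≠ b → G.degree v = d ∨ G.degree v ≤ 1) (had : G.degree a ≠ d)
    (f : Copy H G) (hout : ∀ y ∉ Set.range f, y ≠ a → G.Adj a y) (hwd : G.degree w = d)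
    (hwf : w ∉ Set.range f) (huniq : ∀ v, G.degree v = d → v ∉ Set.range f → v = w) :
    G.neighborFinset w ⊆ {a, b} := by
  intro y hy
  rw [mem_neighborFinset] at hy
  rw [mem_insert, mem_singleton]
  by_contra! hyab
  rcases hother y hyab.1 hyab.2 with hyd | hy1
  · by_cases hyf : y ∈ Set.range f
    · obtain ⟨z, rfl⟩ := hyf
      obtain ⟨u, -, rfl⟩ :=
        f.exists_adj_apply_eq_of_degree_le (hyd.trans (hH z).symm).le hy.symm
      exact hwf ⟨u, rfl⟩
    · obtain rfl := huniq y hyd hyf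
      exact G.irrefl hy
  · have hyf : y ∉ Set.range f := by
      rintro ⟨z, rfl⟩
      have := hH z ▸ f.degree_le z
      omega
    have haw : a ≠ w := fun h => had (h ▸ hwd)
    have := two_le_degree_of_adj (hout y hyf hyab.1).symm hy.symm haw
    omega

theorem not_isContained_of_degree_pattern [DecidableEq V] [DecidableRel H.Adj]
    (hH : H.IsRegularOfDegree 3) (hW : Fintype.card W = 6) {a b : V} (ha : Gᶜ.degree a ≤ 1)
    (ha3 : G.degree a ≠ 3) (hother : ∀ v, v ≠ a → v ≠ b → G.degree v = 3 ∨ G.degree v ≤ 1)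
    (h3 : #{v | G.degree v = 3} = 5) : ¬H ⊑ G := by
  rintro ⟨f⟩
  have hlow := card_le_card_filter_degree_add_two hH
    (fun v hva hvb => by rcases hother v hva hvb with h | h <;> omega) f
  have hadj := card_filter_degree_eq_adj_le hH a f
  have hnadj := card_filter_degree_eq_not_adj_le_one ha ha3 f
  have hsplit := card_filter_add_card_filter_not (s := ({u | G.degree (f u) = 3} : Finset W))
    fun u => G.Adj (f u) a
  rw [filter_filter, filter_filter] at hsplit
  obtain ⟨x, hx⟩ : ({u | G.degree (f u) = 3 ∧ ¬G.Adj (f u) a} : Finset W).Nonempty :=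
    card_pos.mp (by omega)
  simp only [mem_filter, mem_univ, true_and] at hx
  have hout : ∀ y ∉ Set.range f, y ≠ a → G.Adj a y := fun y hyf hya =>
    adj_of_degree_compl_le_one ha ((compl_adj G a (f x)).mpr
      ⟨fun h => ha3 (h ▸ hx.1), fun h => hx.2 h.symm⟩) hya fun h => hyf ⟨x, h.symm⟩
  obtain ⟨w, ⟨hw3, hwf⟩, huniq⟩ :=
    existsUnique_degree_eq_notMem_range f h3 (k := 4) (by omega)
  have hw := neighborFinset_subset_pair hH (by norm_num) hother ha3 f hout hw3 hwf
    fun v hv hvf => huniq v ⟨hv, hvf⟩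
  have := (card_le_card hw).trans card_le_two
  rw [card_neighborFinset_eq_degree, hw3] at this
  omega

end SimpleGraph

theorem IsDegSeqOf.card_filter_degree_eq_s14 {V : Type} [Fintype V] {G : SimpleGraph V}
    [DecidableRel G.Adj] {π : List ℕ} (h : IsDegSeqOf G π) (m : ℕ) :
    #{v | G.degree v = m} = π.count m := by
  have hdeg : (fun v => (G.neighborSet v).ncard) = fun v => G.degree v :=
    funext fun v => by rw [Set.ncard_eq_toFinset_card']; rfl
  rw [IsDegSeqOf, hdeg] at h
  rw [← Multiset.coe_count, ← h, Multiset.count_map, card_def, filter_val]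
  simp only [eq_comm]

theorem IsDegSeqOf.degree_mem_s14 {V : Type} [Fintype V] {G : SimpleGraph V} [DecidableRel G.Adj]
    {π : List ℕ} (h : IsDegSeqOf G π) (v : V) : G.degree v ∈ π :=
  List.count_pos_iff.mp (h.card_filter_degree_eq_s14 (G.degree v) ▸ card_pos.mpr ⟨v, by simp⟩)

theorem IsDegSeqOf.existsUnique_degree_eq {V : Type} [Fintype V] {G : SimpleGraph V}
    [DecidableRel G.Adj] {π : List ℕ} (h : IsDegSeqOf G π) {m : ℕ} (hm : π.count m = 1) :
    ∃! v, G.degree v = m := by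
  obtain ⟨v, hv⟩ := card_eq_one.mp ((h.card_filter_degree_eq_s14 m).trans hm)
  refine ⟨v, by simpa using hv.ge (mem_singleton_self v), fun w hw => ?_⟩
  rw [← mem_singleton, ← hv]
  simpa using hw

abbrev specialSeq (n : ℕ) : List ℕ :=
  [n - 2, 4] ++ List.replicate 5 3 ++ List.replicate (n - 7) 1

theorem length_specialSeq {n : ℕ} (hn : 7 ≤ n) : (specialSeq n).length = n := by
  simp only [List.length_append, List.length_cons, List.length_nil, List.length_replicate]
  omega

theorem count_specialSeq {n : ℕ} (hn : 7 ≤ n) :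
    (specialSeq n).count (n - 2) = 1 ∧ (specialSeq n).count 4 = 1 ∧
      (specialSeq n).count 3 = 5 := by
  simp only [List.count_append, List.count_cons, List.count_nil, List.count_replicate,
    beq_iff_eq]
  refine ⟨?_, ?_, ?_⟩ <;> split_ifs <;> omega

theorem eq_of_mem_specialSeq {n m : ℕ} (h : m ∈ specialSeq n) :
    m = n - 2 ∨ m = 4 ∨ m = 3 ∨ m = 1 := by
  simp only [specialSeq, List.mem_append, List.mem_cons, List.mem_replicate,
    List.not_mem_nil] at h
  tauto

/-- For every `n ≥ 7`, the sequence `(n−2, 4, 3⁵, 1^{n−7})` is not potentially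
`K_{3,3}`-graphic. -/
theorem not_potentially_K33_special (n : ℕ) (hn : 7 ≤ n) :
    ¬ PotentiallyGraphic K33
      ([n - 2, 4] ++ List.replicate 5 3 ++ List.replicate (n - 7) 1) := by
  rintro ⟨G, hG, f, hf⟩
  classical
  obtain ⟨hcount_a, hcount_b, hcount_3⟩ := count_specialSeq hn
  obtain ⟨a, ha, ha_uniq⟩ := hG.existsUnique_degree_eq hcount_a
  obtain ⟨b, -, hb_uniq⟩ := hG.existsUnique_degree_eq hcount_b
  refine not_isContained_of_degree_pattern K33_isRegularOfDegree rfl (a := a) (b := b)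
    ?_ (by omega) (fun v hva hvb => ?_) ?_ ⟨f.toCopy hf⟩
  · rw [degree_compl, ha, Fintype.card_fin, length_specialSeq hn]
    omega
  · rcases eq_of_mem_specialSeq (hG.degree_mem_s14 v) with h | h | h | h
    · exact absurd (ha_uniq v h) hva
    · exact absurd (hb_uniq v h) hvb
    · exact Or.inl h
    · exact Or.inr h.le
  · rw [hG.card_filter_degree_eq_s14, hcount_3]
end

section
/- Let n ≥ 6 and let π = (d_1, …, d_n) be a graphic sequence that is potentially K_{3,3}-graphic. If d_2 = n − 1, then d_3 ≥ 5 or d_6 ≥ 4. -/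
open Finset

theorem List.lt_countP_iff_le_getD {c : ℕ} (hc : 0 < c) :
    ∀ {π : List ℕ}, π.Pairwise (· ≥ ·) → ∀ {k : ℕ}, k < π.countP (c ≤ ·) ↔ c ≤ π.getD k 0
  | [], _, _ => by simp [hc.ne']
  | a :: l, hπ, k => by
    rw [List.pairwise_cons] at hπ
    have ih := fun {k} => lt_countP_iff_le_getD hc hπ.2 (k := k)
    by_cases ha : c ≤ a
    · cases k <;> simp [ha, ih]
    · have hl : l.countP (c ≤ ·) = 0 :=
        List.countP_eq_zero.2 fun x hx => by simpa using (hπ.1 x hx).trans_lt (not_le.1 ha)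
      cases k with
      | zero => simp [ha, hl]
      | succ k => simpa [ha, hl] using mt (ih (k := k)).2

theorem IsDegSeqOf.le_getD_iff {V : Type} [Fintype V] {G : SimpleGraph V} {π : List ℕ}
    (h : IsDegSeqOf G π) (hπ : π.Pairwise (· ≥ ·)) {c : ℕ} (hc : 0 < c) {k : ℕ} :
    c ≤ π.getD k 0 ↔ k < #{x | c ≤ (G.neighborSet x).ncard} := by
  rw [← List.lt_countP_iff_le_getD hc hπ, ← Multiset.coe_countP, ← h, Multiset.countP_map]
  rfl

namespace SimpleGraph

variable {V : Type*} {G : SimpleGraph V}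

theorem isUniversal_iff_card_sub_one_le_ncard_neighborSet [Fintype V] {v : V} :
    G.IsUniversal v ↔ Fintype.card V - 1 ≤ (G.neighborSet v).ncard := by
  have hcompl : ({v}ᶜ : Set V).ncard = Fintype.card V - 1 := by
    rw [Set.ncard_compl, Set.ncard_singleton, Nat.card_eq_fintype_card]
  rw [← neighborSet_eq_compl_singleton, ← hcompl]
  exact ⟨fun h => h ▸ le_rfl,
    fun h => Set.eq_of_subset_of_ncard_le (G.neighborSet_subset_compl v) h⟩

theorem card_le_ncard_neighborSet [Finite V] {x : V} {T : Finset V}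
    (h : ∀ y ∈ T, G.Adj x y) : #T ≤ (G.neighborSet x).ncard := by
  rw [← Set.ncard_coe_finset]
  exact Set.ncard_le_ncard h

theorem exists_parts_of_completeBipartiteGraph_embedding [DecidableEq V] {α β : Type*}
    [Fintype α] [Fintype β] (f : completeBipartiteGraph α β →g G) (hf : Function.Injective f) :
    ∃ A B : Finset V, #A = Fintype.card α ∧ #B = Fintype.card β ∧ Disjoint A B ∧
      ∀ a ∈ A, ∀ b ∈ B, G.Adj a b := by
  refine ⟨univ.image (f ∘ Sum.inl), univ.image (f ∘ Sum.inr), ?_, ?_, ?_, ?_⟩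
  · rw [card_image_of_injective _ (hf.comp Sum.inl_injective), card_univ]
  · rw [card_image_of_injective _ (hf.comp Sum.inr_injective), card_univ]
  · simp only [Finset.disjoint_left, mem_image, mem_univ, true_and, Function.comp_apply]
    rintro _ ⟨i, rfl⟩ ⟨j, hj⟩
    exact Sum.inr_ne_inl (hf hj)
  · simp only [mem_image, mem_univ, true_and, Function.comp_apply]
    rintro _ ⟨i, rfl⟩ _ ⟨j, rfl⟩
    exact f.map_adj (by simp)

section CompleteBipartitePair

variable [Fintype V] [DecidableEq V] {A B U : Finset V}

theorem card_union_le_ncard_neighborSet (hAB : ∀ a ∈ A, ∀ b ∈ B, G.Adj a b)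
    (hU : ∀ u ∈ U, G.IsUniversal u) {x : V} (hxA : x ∈ A) (hxU : x ∉ U) :
    #(B ∪ U) ≤ (G.neighborSet x).ncard :=
  card_le_ncard_neighborSet fun y hy => (mem_union.1 hy).elim (hAB x hxA y)
    fun hyU => (hU y hyU (ne_of_mem_of_not_mem hyU hxU)).symm

theorem two_lt_card_five_le_ncard_neighborSet_of_subset (hAB : ∀ a ∈ A, ∀ b ∈ B, G.Adj a b)
    (hA : #A = 3) (hB : #B = 3) (hdisj : Disjoint A B) (hU : ∀ u ∈ U, G.IsUniversal u)
    (hU2 : #U = 2) (hV : 6 ≤ Fintype.card V) (hUA : U ⊆ A) :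
    2 < #{x | 5 ≤ (G.neighborSet x).ncard} := by
  obtain ⟨z, hz⟩ : (A \ U).Nonempty := by
    rw [← card_pos, card_sdiff_of_subset hUA, hA, hU2]
    norm_num
  rw [mem_sdiff] at hz
  have hz5 : 5 ≤ (G.neighborSet z).ncard :=
    calc 5 = #(B ∪ U) := by
          rw [card_union_of_disjoint (disjoint_of_subset_right hUA hdisj.symm), hB, hU2]
      _ ≤ _ := card_union_le_ncard_neighborSet hAB hU hz.1 hz.2
  calc 2 < #(insert z U) := by rw [card_insert_of_notMem hz.2, hU2]; norm_num
    _ ≤ _ := card_le_card fun x hx => by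
      rw [mem_filter]
      refine ⟨mem_univ x, (mem_insert.1 hx).elim (fun h => h ▸ hz5) fun hxU => ?_⟩
      have := isUniversal_iff_card_sub_one_le_ncard_neighborSet.1 (hU x hxU)
      omega

theorem four_le_ncard_neighborSet_of_not_subset (hAB : ∀ a ∈ A, ∀ b ∈ B, G.Adj a b)
    (hB : #B = 3) (hU : ∀ u ∈ U, G.IsUniversal u) (hV : 5 ≤ Fintype.card V) (hUB : ¬U ⊆ B)
    {x : V} (hxA : x ∈ A) : 4 ≤ (G.neighborSet x).ncard := by
  by_cases hxU : x ∈ U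
  · have := isUniversal_iff_card_sub_one_le_ncard_neighborSet.1 (hU x hxU)
    omega
  calc 4 = #B + 1 := by rw [hB]
    _ ≤ #(B ∪ U) := card_lt_card (left_lt_sup.2 hUB)
    _ ≤ _ := card_union_le_ncard_neighborSet hAB hU hxA hxU

end CompleteBipartitePair

theorem two_lt_card_five_le_or_five_lt_card_four_le_of_K33 [Fintype V] [DecidableEq V]
    (f : K33 →g G) (hf : Function.Injective f) {U : Finset V}
    (hU : ∀ u ∈ U, G.IsUniversal u) (hU2 : #U = 2) :
    2 < #{x | 5 ≤ (G.neighborSet x).ncard} ∨ 5 < #{x | 4 ≤ (G.neighborSet x).ncard} := by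
  have hV : 6 ≤ Fintype.card V := by simpa using Fintype.card_le_of_injective f hf
  obtain ⟨A, B, hA, hB, hdisj, hAB⟩ := exists_parts_of_completeBipartiteGraph_embedding f hf
  rw [Fintype.card_fin] at hA hB
  have hBA : ∀ b ∈ B, ∀ a ∈ A, G.Adj b a := fun b hb a ha => (hAB a ha b hb).symm
  by_cases hUA : U ⊆ A
  · exact .inl (two_lt_card_five_le_ncard_neighborSet_of_subset hAB hA hB hdisj hU hU2 hV hUA)
  by_cases hUB : U ⊆ B
  · exact .inl (two_lt_card_five_le_ncard_neighborSet_of_subset hBA hB hA hdisj.symm hU hU2 hV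
      hUB)
  refine .inr (calc 5 < #(A ∪ B) := by rw [card_union_of_disjoint hdisj, hA, hB]; norm_num
    _ ≤ _ := card_le_card fun x hx => mem_filter.2 ⟨mem_univ x, (mem_union.1 hx).elim
      (four_le_ncard_neighborSet_of_not_subset hAB hB hU (by omega) hUB)
      (four_le_ncard_neighborSet_of_not_subset hBA hA hU (by omega) hUA)⟩)

end SimpleGraph

/-- `π.getD (i-1) 0` is the `i`-th term `dᵢ`. -/
theorem K33_necessary_condition_3_general
    (n : ℕ) (hn : 6 ≤ n) (π : List ℕ) (hlen : π.length = n)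
    (hsorted : π.Pairwise (· ≥ ·))
    (hpot : PotentiallyGraphic K33 π) (hd2 : π.getD 1 0 = n - 1) :
    5 ≤ π.getD 2 0 ∨ 4 ≤ π.getD 5 0 := by
  obtain ⟨G, hG, f, hf⟩ := hpot
  have hfull : 1 < #{x | Fintype.card (Fin π.length) - 1 ≤ (G.neighborSet x).ncard} := by
    rw [← hG.le_getD_iff hsorted (by rw [Fintype.card_fin, hlen]; omega), hd2,
      Fintype.card_fin, hlen]
  obtain ⟨U, hUfull, hU2⟩ := exists_subset_card_eq hfull
  have hU : ∀ u ∈ U, G.IsUniversal u := fun u hu =>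
    SimpleGraph.isUniversal_iff_card_sub_one_le_ncard_neighborSet.2 (mem_filter.1 (hUfull hu)).2
  rw [hG.le_getD_iff hsorted (by norm_num), hG.le_getD_iff hsorted (by norm_num)]
  exact G.two_lt_card_five_le_or_five_lt_card_four_le_of_K33 f hf hU hU2

/-- Necessity of condition (3) in Theorem 3.1: if a graphic sequence with `n ≥ 6` terms
is potentially `K_{3,3}`-graphic and `d₂ = n−1`, then `d₃ ≥ 5` or `d₆ ≥ 4`.
Here `π.getD (i-1) 0` is the `i`-th term `dᵢ`. -/
theorem K33_necessary_condition_3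
    (n : ℕ) (hn : 6 ≤ n) (π : List ℕ) (hlen : π.length = n)
    (hsorted : π.Pairwise (· ≥ ·)) (hgraphic : IsGraphic π)
    (hpot : PotentiallyGraphic K33 π) (hd2 : π.getD 1 0 = n - 1) :
    5 ≤ π.getD 2 0 ∨ 4 ≤ π.getD 5 0 :=
  K33_necessary_condition_3_general n hn π hlen hsorted hpot hd2
end

section
/- For every n ≥ 9, the sequence π = (n−2, 4, 3^{n−2}) of n terms is potentially K_{3,3}-graphic. -/
theorem isDegSeqOf_of_ncard_neighborSet_eq {π : List ℕ} (G : SimpleGraph (Fin π.length))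
    (hdeg : ∀ v, (G.neighborSet v).ncard = π[v.val]) : IsDegSeqOf G π := by
  rw [IsDegSeqOf, Fin.univ_val_map, funext hdeg, List.ofFn_getElem]

theorem PotentiallyGraphic.of_injective_hom {W : Type} {H : SimpleGraph W} {π : List ℕ} {n : ℕ}
    (hlen : π.length = n) (G : SimpleGraph (Fin n))
    (hdeg : ∀ v : Fin n, (G.neighborSet v).ncard = π[v.val]'(hlen ▸ v.isLt))
    (f : H →g G) (hf : Function.Injective f) : PotentiallyGraphic H π := by
  subst hlen
  exact ⟨G, isDegSeqOf_of_ncard_neighborSet_eq G hdeg, f, hf⟩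

def realizationEdge (n a b : ℕ) : Prop :=
  (a = 0 ∧ b ≠ 0 ∧ b ≠ 2) ∨
  (1 ≤ a ∧ a ≤ 2 ∧ 3 ≤ b ∧ b ≤ 5) ∨
  (6 ≤ a ∧ b = a + 1 ∧ b < n) ∨
  (a = 6 ∧ b = n - 1)

def realization (n : ℕ) : SimpleGraph (Fin n) :=
  SimpleGraph.fromRel fun a b => realizationEdge n a b

def realizationNbhd (n v : ℕ) : Finset ℕ :=
  if v = 0 then Finset.range n \ {0, 2}
  else if v = 1 then {0, 3, 4, 5}
  else if v = 2 then {3, 4, 5}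
  else if v ≤ 5 then {0, 1, 2}
  else {0, if v = 6 then n - 1 else v - 1, if v = n - 1 then 6 else v + 1}

section

variable {n : ℕ} (hn : 9 ≤ n)
include hn

theorem realization_adj_iff (v w : Fin n) :
    (realization n).Adj v w ↔ w.val ∈ realizationNbhd n v := by
  have := v.isLt
  have := w.isLt
  rw [realization, SimpleGraph.fromRel_adj, ne_eq, ← Fin.val_eq_val]
  unfold realizationEdge realizationNbhd
  split_ifs <;> simp only [Finset.mem_sdiff, Finset.mem_range, Finset.mem_insert,
    Finset.mem_singleton] <;> omega

theorem lt_of_mem_realizationNbhd {v w : ℕ} (hv : v < n) (hw : w ∈ realizationNbhd n v) :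
    w < n := by
  unfold realizationNbhd at hw
  split_ifs at hw <;> simp only [Finset.mem_sdiff, Finset.mem_range, Finset.mem_insert,
    Finset.mem_singleton] at hw <;> omega

theorem card_realizationNbhd (v : ℕ) :
    (realizationNbhd n v).card = if v = 0 then n - 2 else if v = 1 then 4 else 3 := by
  unfold realizationNbhd
  split_ifs
  · rw [Finset.card_sdiff_of_subset (by intro x hx; simp at hx; simp; omega),
      Finset.card_range, Finset.card_pair (by decide)]
  all_goals first
    | decide
    | omega
    | exact Finset.card_eq_three.mpr ⟨_, _, _, by omega, by omega, by omega, rfl⟩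

theorem ncard_neighborSet_realization (v : Fin n) :
    ((realization n).neighborSet v).ncard =
      if v.val = 0 then n - 2 else if v.val = 1 then 4 else 3 := by
  have hnbhd : (realization n).neighborSet v =
      ((realizationNbhd n v).attachFin fun _ => lt_of_mem_realizationNbhd hn v.isLt) := by
    ext w
    simp [realization_adj_iff hn]
  rw [hnbhd, Set.ncard_coe_finset, Finset.card_attachFin, card_realizationNbhd hn v]

theorem realization_adj_of_lt_three {v w : Fin n} (hv : v.val < 3) (hw : 3 ≤ w.val ∧ w.val < 6) :
    (realization n).Adj v w := by
  rw [realization_adj_iff hn]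
  unfold realizationNbhd
  split_ifs <;> simp only [Finset.mem_sdiff, Finset.mem_range, Finset.mem_insert,
    Finset.mem_singleton] <;> omega

end

theorem exists_injective_hom_K33_realization {n : ℕ} (hn : 9 ≤ n) :
    ∃ f : K33 →g realization n, Function.Injective f := by
  let e : Fin 3 ⊕ Fin 3 → Fin n := Sum.elim (fun i => ⟨i, by omega⟩) (fun j => ⟨j + 3, by omega⟩)
  have hside (i j : Fin 3) : (realization n).Adj (e (.inl i)) (e (.inr j)) :=
    realization_adj_of_lt_three hn i.isLt ⟨by simp [e], by simp [e]; omega⟩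
  refine ⟨⟨e, fun {a b} hab => ?_⟩, ?_⟩
  · rcases a with i | i <;> rcases b with j | j <;> simp [K33] at hab
    · exact hside i j
    · exact (hside j i).symm
  · rintro (i | i) (j | j) h <;> simp [e, Fin.ext_iff] at h ⊢ <;> omega

theorem getElem_nsub_two_four_replicate_three {n v : ℕ}
    (hv : v < ([n - 2, 4] ++ List.replicate (n - 2) 3).length) :
    ([n - 2, 4] ++ List.replicate (n - 2) 3)[v] =
      if v = 0 then n - 2 else if v = 1 then 4 else 3 := by
  rcases v with _ | _ | v <;> simp

/-- For every `n ≥ 9`, the sequence `(n−2, 4, 3^{n−2})` is potentially `K_{3,3}`-graphic. -/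
theorem potentially_K33_nsub2_four_threes (n : ℕ) (hn : 9 ≤ n) :
    PotentiallyGraphic K33 ([n - 2, 4] ++ List.replicate (n - 2) 3) := by
  obtain ⟨f, hf⟩ := exists_injective_hom_K33_realization hn
  refine PotentiallyGraphic.of_injective_hom (by simp; omega) (realization n) (fun v => ?_) f hf
  rw [ncard_neighborSet_realization hn, getElem_nsub_two_four_replicate_three]
end

section
/- Let H be a simple graph, let π = (d_1, …, d_n) be a sequence of nonnegative integers with d_1 ≥ … ≥ d_n, n ≥ 2, and 1 ≤ d_n ≤ n − 1, and let π′ be the residual sequence obtained by laying off d_n from π, i.e., the nonincreasing rearrangement of the (n−1)-term sequence (d_1 − 1, …, d_{d_n} − 1, d_{d_n + 1}, …, d_{n−1}). If π′ is potentially H-graphic, then π is potentially H-graphic. -/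
/-!
Take a realization `G'` of `π'` containing `H`. The `dₙ` vertices of `G'` that carry the
degrees `d₁ - 1, …, d_{dₙ} - 1` form a set `S`; adding a new vertex joined exactly to `S`
raises those degrees back to `d₁, …, d_{dₙ}` and gives the new vertex degree `|S| = dₙ`.
The result realizes `π` and still contains `G'`, hence `H`. As `π` is sorted, `dᵢ ≥ dₙ ≥ 1`,
so adding `1` undoes the truncated subtraction `dᵢ - 1`.
-/

namespace Multiset

theorem exists_eq_add_of_map_eq_add {α β : Type*} {f : α → β} {s : Multiset α}
    {t₁ t₂ : Multiset β} (h : s.map f = t₁ + t₂) :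
    ∃ s₁ s₂, s = s₁ + s₂ ∧ s₁.map f = t₁ ∧ s₂.map f = t₂ := by
  induction t₁ using Multiset.induction_on generalizing s with
  | empty => exact ⟨0, s, by simp, by simp, by simpa using h⟩
  | cons b t₁ ih =>
    have hb : b ∈ s.map f := by simp [h]
    obtain ⟨a, ha, rfl⟩ := mem_map.1 hb
    obtain ⟨s', rfl⟩ := exists_cons_of_mem ha
    rw [map_cons, cons_add, cons_inj_right] at h
    obtain ⟨s₁, s₂, rfl, h₁, h₂⟩ := ih h
    exact ⟨a ::ₘ s₁, s₂, (cons_add _ _ _).symm, by rw [map_cons, h₁], h₂⟩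

end Multiset

namespace Finset

theorem exists_map_val_eq_of_map_univ_val_eq_add {α β : Type*} [Fintype α] [DecidableEq α]
    {f : α → β} {t₁ t₂ : Multiset β} (h : univ.val.map f = t₁ + t₂) :
    ∃ S : Finset α, S.val.map f = t₁ ∧ Sᶜ.val.map f = t₂ := by
  obtain ⟨s₁, s₂, hs, h₁, h₂⟩ := Multiset.exists_eq_add_of_map_eq_add h
  have hnodup : s₁.Nodup := (Multiset.nodup_add.1 (hs ▸ univ.nodup)).1
  refine ⟨⟨s₁, hnodup⟩, h₁, ?_⟩
  rwa [compl_eq_univ_sdiff, sdiff_val, hs, add_tsub_cancel_left]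

end Finset

namespace SimpleGraph

variable {V : Type*} (G : SimpleGraph V) (S : Set V)

def addVertex : SimpleGraph (Option V) where
  Adj
    | some a, some b => G.Adj a b
    | some a, none | none, some a => a ∈ S
    | none, none => False
  symm := ⟨by rintro (_ | a) (_ | b) h <;> first | exact h | exact G.adj_symm h⟩
  loopless := ⟨by rintro (_ | a) h; exacts [h, G.loopless.irrefl a h]⟩

def embeddingAddVertex : G ↪g G.addVertex S where
  toEmbedding := Function.Embedding.some
  map_rel_iff' := Iff.rfl

theorem neighborSet_addVertex_none : (G.addVertex S).neighborSet none = some '' S := by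
  ext (_ | b) <;> simp [addVertex]

variable {G S}

theorem neighborSet_addVertex_some_of_mem {a : V} (ha : a ∈ S) :
    (G.addVertex S).neighborSet (some a) = insert none (some '' G.neighborSet a) := by
  ext (_ | b) <;> simp [addVertex, ha]

theorem neighborSet_addVertex_some_of_notMem {a : V} (ha : a ∉ S) :
    (G.addVertex S).neighborSet (some a) = some '' G.neighborSet a := by
  ext (_ | b) <;> simp [addVertex, ha]

theorem ncard_neighborSet_addVertex_some_of_notMem {a : V} (ha : a ∉ S) :
    ((G.addVertex S).neighborSet (some a)).ncard = (G.neighborSet a).ncard := by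
  rw [neighborSet_addVertex_some_of_notMem ha,
    Set.ncard_image_of_injective _ (Option.some_injective _)]

theorem ncard_neighborSet_addVertex_some_of_mem [Finite V] {a : V} (ha : a ∈ S) :
    ((G.addVertex S).neighborSet (some a)).ncard = (G.neighborSet a).ncard + 1 := by
  rw [neighborSet_addVertex_some_of_mem ha, Set.ncard_insert_of_notMem (by simp),
    Set.ncard_image_of_injective _ (Option.some_injective _)]

end SimpleGraph

open SimpleGraph

theorem isDegSeqOf_addVertex {V : Type} [Fintype V] [DecidableEq V] (G : SimpleGraph V)
    (S : Finset V) {l₁ l₂ : List ℕ}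
    (h₁ : S.val.map (fun v => (G.neighborSet v).ncard) = l₁)
    (h₂ : Sᶜ.val.map (fun v => (G.neighborSet v).ncard) = l₂) :
    IsDegSeqOf (G.addVertex S) (l₁.map (· + 1) ++ l₂ ++ [S.card]) := by
  have huniv : (Finset.univ : Finset V).val = S.val + Sᶜ.val := by
    rw [← Finset.disjUnion_val _ _ disjoint_compl_right, Finset.disjUnion_eq_union,
      Finset.union_compl]
  have hS : S.val.map (fun v => ((G.addVertex S).neighborSet (some v)).ncard) =
      l₁.map (· + 1) := by
    rw [← Multiset.map_coe, ← h₁, Multiset.map_map]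
    exact Multiset.map_congr rfl fun a ha => ncard_neighborSet_addVertex_some_of_mem ha
  have hSc : Sᶜ.val.map (fun v => ((G.addVertex S).neighborSet (some v)).ncard) = l₂ := by
    rw [← h₂]
    refine Multiset.map_congr rfl fun a ha => ncard_neighborSet_addVertex_some_of_notMem ?_
    simpa using ha
  have hnone : ((G.addVertex S).neighborSet none).ncard = S.card := by
    rw [neighborSet_addVertex_none, Set.ncard_image_of_injective _ (Option.some_injective _),
      Set.ncard_coe_finset]
  have hunivOption :
      (Finset.univ : Finset (Option V)).val = none ::ₘ Finset.univ.val.map some := by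
    rw [univ_option]
    rfl
  unfold IsDegSeqOf
  rw [hunivOption, Multiset.map_cons, Multiset.map_map, hnone, huniv, Multiset.map_add,
    Function.comp_def, hS, hSc, Multiset.coe_add, Multiset.cons_coe, Multiset.coe_eq_coe]
  exact (List.perm_append_singleton _ _).symm

theorem IsDegSeqOf.map_equiv {V V' : Type} [Fintype V] [Fintype V'] {G : SimpleGraph V}
    {π : List ℕ} (e : V ≃ V') (h : IsDegSeqOf G π) : IsDegSeqOf (G.map e.toEmbedding) π := by
  unfold IsDegSeqOf at *
  rw [← Multiset.map_univ_val_equiv e, Multiset.map_map]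
  refine Eq.trans (Multiset.map_congr rfl fun v _ => ?_) h
  change ((G.map e.toEmbedding).neighborSet (e.toEmbedding v)).ncard = _
  rw [neighborSet_map, Set.ncard_image_of_injective _ e.toEmbedding.injective]

namespace PotentiallyGraphic

variable {W : Type} {H : SimpleGraph W}

theorem of_isDegSeqOf {V : Type} [Fintype V] {G : SimpleGraph V} {π : List ℕ}
    (hG : IsDegSeqOf G π) (f : H →g G) (hf : Function.Injective f) : PotentiallyGraphic H π := by
  have hcard : Fintype.card V = π.length := by
    simpa using congrArg Multiset.card hG
  let e := Fintype.equivFinOfCardEq hcard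
  exact ⟨G.map e.toEmbedding, hG.map_equiv e, (Embedding.map e.toEmbedding G).toHom.comp f,
    (Embedding.map e.toEmbedding G).injective.comp hf⟩

theorem perm {l₁ l₂ : List ℕ} (h : PotentiallyGraphic H l₁) (hl : l₁.Perm l₂) :
    PotentiallyGraphic H l₂ := by
  obtain ⟨G, hG, f, hf⟩ := h
  exact of_isDegSeqOf (hG.trans (Multiset.coe_eq_coe.2 hl)) f hf

theorem append_singleton_of_layoff {L : List ℕ} {d : ℕ} (hd : d ≤ L.length)
    (hpos : ∀ x ∈ L.take d, 1 ≤ x)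
    (h : PotentiallyGraphic H ((L.take d).map (· - 1) ++ L.drop d)) :
    PotentiallyGraphic H (L ++ [d]) := by
  classical
  obtain ⟨G, hG, f, hf⟩ := h
  obtain ⟨S, hS, hSc⟩ :=
    Finset.exists_map_val_eq_of_map_univ_val_eq_add (hG.trans (Multiset.coe_add _ _).symm)
  have hcard : S.card = d := by
    simpa [hd] using congrArg Multiset.card hS
  have hsucc_pred : ((L.take d).map (· - 1)).map (· + 1) = L.take d := by
    rw [List.map_map]
    refine (List.map_congr_left fun x hx => ?_).trans (List.map_id _)
    have := hpos x hx
    simp only [Function.comp_apply, id_eq]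
    omega
  have hdeg := isDegSeqOf_addVertex G S hS hSc
  rw [hsucc_pred, hcard, List.take_append_drop] at hdeg
  exact of_isDegSeqOf hdeg ((embeddingAddVertex G S).toHom.comp f)
    ((embeddingAddVertex G S).injective.comp hf)

end PotentiallyGraphic

theorem potentially_of_layoff_general {W : Type} (H : SimpleGraph W)
    (n : ℕ) (π π' : List ℕ) (hlen : π.length = n)
    (hsorted : π.Pairwise (· ≥ ·))
    (hdn1 : 1 ≤ π.getD (n - 1) 0) (hdn2 : π.getD (n - 1) 0 ≤ n - 1)
    (hperm : π'.Perm
      (((π.dropLast.take (π.getD (n - 1) 0)).map (· - 1)) ++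
        π.dropLast.drop (π.getD (n - 1) 0)))
    (hpot : PotentiallyGraphic H π') :
    PotentiallyGraphic H π := by
  obtain rfl | ⟨L, d, rfl⟩ := π.eq_nil_or_concat
  · simp at hdn1
  subst hlen
  simp only [List.concat_eq_append, List.length_append, List.length_singleton,
    Nat.add_sub_cancel, List.dropLast_concat] at hsorted hdn1 hdn2 hperm ⊢
  have hlast : (L ++ [d]).getD L.length 0 = d := by simp
  rw [hlast] at hdn1 hdn2 hperm
  have hge : ∀ x ∈ L, d ≤ x := by simpa using (List.pairwise_append.1 hsorted).2.2
  exact (hpot.perm hperm).append_singleton_of_layoff hdn2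
    fun x hx => hdn1.trans (hge x (List.mem_of_mem_take hx))

/-- Corollary 2.6: if the residual sequence `π'` obtained by laying off the last
(smallest) term `dₙ` from `π` is potentially `H`-graphic, then so is `π`.
Here `π'` is the nonincreasing rearrangement of
`(d₁ − 1, …, d_{dₙ} − 1, d_{dₙ+1}, …, d_{n−1})`, with `dₙ = π.getD (n−1) 0`. -/
theorem potentially_of_layoff {W : Type} (H : SimpleGraph W)
    (n : ℕ) (hn : 2 ≤ n) (π π' : List ℕ) (hlen : π.length = n)
    (hsorted : π.Pairwise (· ≥ ·))
    (hdn1 : 1 ≤ π.getD (n - 1) 0) (hdn2 : π.getD (n - 1) 0 ≤ n - 1)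
    (hsorted' : π'.Pairwise (· ≥ ·))
    (hperm : π'.Perm
      (((π.dropLast.take (π.getD (n - 1) 0)).map (· - 1)) ++
        π.dropLast.drop (π.getD (n - 1) 0)))
    (hpot : PotentiallyGraphic H π') :
    PotentiallyGraphic H π :=
  potentially_of_layoff_general H n π π' hlen hsorted hdn1 hdn2 hperm hpot
end
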